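/- Let ψ ∈ S(m_ψ, L_ψ) with minimizer y_opt, let 𝓖 satisfy the connectivity assumption with a single informed agent 𝓥_l = {i}, and let r ∈ ℝ^{Nd} be arbitrary. Then z minimizes f(y) = ½(y−r)ᵀ(𝓛⊗I_d)(y−r) + ψ(y_i) if and only if z_j = y_opt + (r_j − r_i) for every vertex j. -/

import Mathlib

open Matrix
open scoped Kronecker

/-! The quadratic part `½ (y - r)ᵀ (𝓛 ⊗ I) (y - r)` of `f` is nonnegative and, since every agent
is connected to `i₀`, vanishes exactly when `y - r` takes the same value at every agent. Strong
monotonicity of `∇ψ` makes `yopt` the strict global minimizer of `ψ`. Hence `ψ yopt` is a lower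
bound for `f`, attained exactly where `y - r` is constant and `y_{i₀} = yopt`. -/

def memS {E : Type*} [NormedAddCommGroup E] [InnerProductSpace ℝ E] [CompleteSpace E]
    (m L : ℝ) (f : E → ℝ) : Prop :=
  ContDiff ℝ 1 f ∧
    ∀ y₁ y₂ : E,
      m * ‖y₁ - y₂‖ ^ 2 ≤ (inner ℝ (gradient f y₁ - gradient f y₂) (y₁ - y₂) : ℝ) ∧
      (inner ℝ (gradient f y₁ - gradient f y₂) (y₁ - y₂) : ℝ) ≤ L * ‖y₁ - y₂‖ ^ 2

noncomputable def bigf {N d : ℕ} (𝓛 : Matrix (Fin N) (Fin N) ℝ)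
    (r : EuclideanSpace ℝ (Fin N × Fin d)) (Vl : Finset (Fin N))
    (ψ : EuclideanSpace ℝ (Fin d) → ℝ) (y : EuclideanSpace ℝ (Fin N × Fin d)) : ℝ :=
  (1 / 2) * ((fun p => y p - r p) ⬝ᵥ
      (𝓛 ⊗ₖ (1 : Matrix (Fin d) (Fin d) ℝ)).mulVec (fun p => y p - r p))
    + ∑ i ∈ Vl, ψ (WithLp.toLp 2 (fun j => y (i, j)))

section InnerGradient

variable {E : Type*} [NormedAddCommGroup E] [InnerProductSpace ℝ E] [CompleteSpace E]
  {m : ℝ} {f : E → ℝ} {y₀ : E}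

/- Along the segment `t ↦ y₀ + t • (y - y₀)` the slope of `f` is at least `m t ‖y - y₀‖²`, so
`f (y₀ + t • (y - y₀)) - m t² ‖y - y₀‖² / 2` is monotone on `[0, 1]`. -/
theorem add_sq_norm_sub_le_of_inner_gradient (hf : Differentiable ℝ f)
    (hmono : ∀ y : E, m * ‖y - y₀‖ ^ 2 ≤ (inner ℝ (gradient f y) (y - y₀) : ℝ)) (y : E) :
    f y₀ + m / 2 * ‖y - y₀‖ ^ 2 ≤ f y := by
  set v := y - y₀
  set g : ℝ → ℝ := fun t => f (y₀ + t • v) - m / 2 * t ^ 2 * ‖v‖ ^ 2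
  have hg : ∀ t : ℝ,
      HasDerivAt g ((inner ℝ (gradient f (y₀ + t • v)) v : ℝ) - m * t * ‖v‖ ^ 2) t := by
    intro t
    have hline : HasDerivAt (fun t : ℝ => y₀ + t • v) v t := by
      simpa using ((hasDerivAt_id t).smul_const v).const_add y₀
    have hf' := (hf (y₀ + t • v)).hasFDerivAt.comp_hasDerivAt t hline
    rw [← inner_gradient_left] at hf'
    have hquad : HasDerivAt (fun t : ℝ => m / 2 * t ^ 2 * ‖v‖ ^ 2) (m * t * ‖v‖ ^ 2) t := by
      refine (((hasDerivAt_pow 2 t).const_mul (m / 2)).mul_const (‖v‖ ^ 2)).congr_deriv ?_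
      push_cast
      ring
    exact hf'.sub hquad
  have hslope : ∀ t ∈ interior (Set.Icc (0 : ℝ) 1),
      0 ≤ (inner ℝ (gradient f (y₀ + t • v)) v : ℝ) - m * t * ‖v‖ ^ 2 := by
    intro t ht
    have ht₀ : 0 < t := (interior_Icc (a := (0 : ℝ)) ▸ ht).1
    have h := hmono (y₀ + t • v)
    rw [add_sub_cancel_left, norm_smul, real_inner_smul_right,
      Real.norm_of_nonneg ht₀.le] at h
    nlinarith
  have hmon : MonotoneOn g (Set.Icc 0 1) :=
    monotoneOn_of_hasDerivWithinAt_nonneg (convex_Icc 0 1)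
      (fun t _ => (hg t).continuousAt.continuousWithinAt)
      (fun t _ => (hg t).hasDerivWithinAt) hslope
  have h01 := hmon (Set.left_mem_Icc.2 zero_le_one) (Set.right_mem_Icc.2 zero_le_one) zero_le_one
  simp only [g, zero_smul, add_zero, one_smul, add_sub_cancel, v] at h01
  linarith

theorem eq_of_le_of_inner_gradient (hm : 0 < m) (hf : Differentiable ℝ f)
    (hmono : ∀ y : E, m * ‖y - y₀‖ ^ 2 ≤ (inner ℝ (gradient f y) (y - y₀) : ℝ))
    {y : E} (hy : f y ≤ f y₀) : y = y₀ := by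
  have h := add_sq_norm_sub_le_of_inner_gradient hf hmono y
  have hsq : ‖y - y₀‖ ^ 2 = 0 := by nlinarith [sq_nonneg ‖y - y₀‖]
  simpa [sub_eq_zero] using hsq

end InnerGradient

namespace Matrix

theorem dotProduct_kronecker_one_mulVec {R ι κ : Type*} [CommSemiring R] [Fintype ι]
    [Fintype κ] [DecidableEq κ] (A : Matrix ι ι R) (w : ι × κ → R) :
    w ⬝ᵥ (A ⊗ₖ (1 : Matrix κ κ R)) *ᵥ w
      = ∑ p : κ, (fun i => w (i, p)) ⬝ᵥ A *ᵥ (fun i => w (i, p)) := by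
  simp only [dotProduct, mulVec, kroneckerMap_apply, one_apply, Fintype.sum_prod_type,
    mul_ite, mul_one, mul_zero, ite_mul, zero_mul, Finset.sum_ite_eq,
    Finset.mem_univ, if_true]
  rw [Finset.sum_comm]

end Matrix

namespace SimpleGraph

variable {V : Type*} [Fintype V] [DecidableEq V] (G : SimpleGraph V) [DecidableRel G.Adj]

theorem dotProduct_lapMatrix_mulVec_nonneg (x : V → ℝ) : 0 ≤ x ⬝ᵥ G.lapMatrix ℝ *ᵥ x := by
  simpa using (posSemidef_lapMatrix ℝ G).dotProduct_mulVec_nonneg x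

theorem dotProduct_lapMatrix_mulVec_eq_zero_iff {i₀ : V} (hconn : ∀ v, G.Reachable v i₀)
    (x : V → ℝ) : x ⬝ᵥ G.lapMatrix ℝ *ᵥ x = 0 ↔ ∀ j, x j = x i₀ := by
  rw [← toLinearMap₂'_apply', lapMatrix_toLinearMap₂'_apply'_eq_zero_iff_forall_reachable]
  exact ⟨fun h j => h j i₀ (hconn j), fun h i j _ => (h i).trans (h j).symm⟩

variable {κ : Type*} [Fintype κ] [DecidableEq κ]

theorem dotProduct_lapMatrix_kronecker_one_mulVec_nonneg (w : V × κ → ℝ) :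
    0 ≤ w ⬝ᵥ (G.lapMatrix ℝ ⊗ₖ (1 : Matrix κ κ ℝ)) *ᵥ w := by
  rw [dotProduct_kronecker_one_mulVec]
  exact Finset.sum_nonneg fun p _ => G.dotProduct_lapMatrix_mulVec_nonneg _

theorem dotProduct_lapMatrix_kronecker_one_mulVec_eq_zero_iff {i₀ : V}
    (hconn : ∀ v, G.Reachable v i₀) (w : V × κ → ℝ) :
    w ⬝ᵥ (G.lapMatrix ℝ ⊗ₖ (1 : Matrix κ κ ℝ)) *ᵥ w = 0 ↔ ∀ j p, w (j, p) = w (i₀, p) := by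
  rw [dotProduct_kronecker_one_mulVec, Finset.sum_eq_zero_iff_of_nonneg
    fun p _ => G.dotProduct_lapMatrix_mulVec_nonneg _]
  simp only [Finset.mem_univ, true_implies, G.dotProduct_lapMatrix_mulVec_eq_zero_iff hconn]
  exact forall_comm

end SimpleGraph

section Formation

variable {N d : ℕ} {G : SimpleGraph (Fin N)} [DecidableRel G.Adj] {i₀ : Fin N}
  {ψ : EuclideanSpace ℝ (Fin d) → ℝ} {yopt : EuclideanSpace ℝ (Fin d)}
  (r : EuclideanSpace ℝ (Fin N × Fin d))

theorem bigf_singleton (y : EuclideanSpace ℝ (Fin N × Fin d)) :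
    bigf (G.lapMatrix ℝ) r {i₀} ψ y
      = 1 / 2 * ((fun p => y p - r p) ⬝ᵥ
          (G.lapMatrix ℝ ⊗ₖ (1 : Matrix (Fin d) (Fin d) ℝ)) *ᵥ (fun p => y p - r p))
        + ψ (WithLp.toLp 2 fun j => y (i₀, j)) := by
  rw [bigf, Finset.sum_singleton]

theorem le_bigf (hψmin : ∀ x, ψ yopt ≤ ψ x) (y : EuclideanSpace ℝ (Fin N × Fin d)) :
    ψ yopt ≤ bigf (G.lapMatrix ℝ) r {i₀} ψ y := by
  rw [bigf_singleton]
  linarith [G.dotProduct_lapMatrix_kronecker_one_mulVec_nonneg (fun p => y p - r p),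
    hψmin (WithLp.toLp 2 fun j => y (i₀, j))]

theorem bigf_le_iff (hconn : ∀ v, G.Reachable v i₀) (hψmin : ∀ x, ψ yopt ≤ ψ x)
    (hψuniq : ∀ x, ψ x ≤ ψ yopt → x = yopt) (z : EuclideanSpace ℝ (Fin N × Fin d)) :
    bigf (G.lapMatrix ℝ) r {i₀} ψ z ≤ ψ yopt ↔
      ∀ (j : Fin N) (p : Fin d), z (j, p) = yopt p + (r (j, p) - r (i₀, p)) := by
  have hQ := G.dotProduct_lapMatrix_kronecker_one_mulVec_nonneg fun p => z p - r p
  have hψz := hψmin (WithLp.toLp 2 fun j => z (i₀, j))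
  have hsplit : bigf (G.lapMatrix ℝ) r {i₀} ψ z ≤ ψ yopt ↔
      (fun p => z p - r p) ⬝ᵥ
          (G.lapMatrix ℝ ⊗ₖ (1 : Matrix (Fin d) (Fin d) ℝ)) *ᵥ (fun p => z p - r p) = 0 ∧
        (WithLp.toLp 2 fun j => z (i₀, j)) = yopt := by
    rw [bigf_singleton]
    constructor
    · intro h
      exact ⟨by linarith, hψuniq _ (by linarith)⟩
    · rintro ⟨hQ₀, hi₀⟩
      rw [hQ₀, hi₀]
      linarith
  rw [hsplit, G.dotProduct_lapMatrix_kronecker_one_mulVec_eq_zero_iff hconn, WithLp.ext_iff,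
    funext_iff]
  constructor
  · rintro ⟨hconst, hi₀⟩ j p
    linarith [hconst j p, hi₀ p]
  · intro h
    exact ⟨fun j p => by linarith [h j p, h i₀ p], fun p => by simpa using h i₀ p⟩

end Formation

theorem stmt7_general {N d : ℕ}
    (G : SimpleGraph (Fin N)) [DecidableRel G.Adj] (i₀ : Fin N)
    (hconn : ∀ v : Fin N, G.Reachable v i₀)
    (mψ Lψ : ℝ) (hmψ : 0 < mψ)
    (ψ : EuclideanSpace ℝ (Fin d) → ℝ) (hψ : memS mψ Lψ ψ)
    (yopt : EuclideanSpace ℝ (Fin d)) (hyopt : gradient ψ yopt = 0)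
    (r : EuclideanSpace ℝ (Fin N × Fin d))
    (z : EuclideanSpace ℝ (Fin N × Fin d)) :
    (∀ y, bigf (G.lapMatrix ℝ) r {i₀} ψ z ≤ bigf (G.lapMatrix ℝ) r {i₀} ψ y) ↔
      ∀ (j : Fin N) (p : Fin d), z (j, p) = yopt p + (r (j, p) - r (i₀, p)) := by
  have hdiff : Differentiable ℝ ψ := hψ.1.differentiable one_ne_zero
  have hmono : ∀ y, mψ * ‖y - yopt‖ ^ 2 ≤ (inner ℝ (gradient ψ y) (y - yopt) : ℝ) := fun y => by
    simpa [hyopt] using (hψ.2 y yopt).1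
  have hψmin : ∀ x, ψ yopt ≤ ψ x := fun x =>
    (le_add_of_nonneg_right (by positivity)).trans
      (add_sq_norm_sub_le_of_inner_gradient hdiff hmono x)
  have hψuniq : ∀ x, ψ x ≤ ψ yopt → x = yopt := fun _ =>
    eq_of_le_of_inner_gradient hmψ hdiff hmono
  have hchar := bigf_le_iff r hconn hψmin hψuniq
  let ystar : EuclideanSpace ℝ (Fin N × Fin d) :=
    WithLp.toLp 2 fun p => yopt p.2 + (r p - r (i₀, p.2))
  constructor
  · intro hmin
    exact (hchar z).1 ((hmin ystar).trans ((hchar ystar).2 fun _ _ => rfl))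
  · intro hz y
    exact ((hchar z).2 hz).trans (le_bigf r hψmin y)

/-- with a single informed agent `𝓥_l = {i₀}` and arbitrary formation
reference `r`, `z` minimizes `f` iff `z_j = y_opt + (r_j − r_{i₀})` for all `j`. -/
theorem stmt7 {N d : ℕ} [NeZero N] [NeZero d]
    (G : SimpleGraph (Fin N)) [DecidableRel G.Adj] (i₀ : Fin N)
    (hconn : ∀ v : Fin N, G.Reachable v i₀)
    (mψ Lψ : ℝ) (hmψ : 0 < mψ) (hmLψ : mψ ≤ Lψ)
    (ψ : EuclideanSpace ℝ (Fin d) → ℝ) (hψ : memS mψ Lψ ψ)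
    (yopt : EuclideanSpace ℝ (Fin d)) (hyopt : gradient ψ yopt = 0)
    (r : EuclideanSpace ℝ (Fin N × Fin d))
    (z : EuclideanSpace ℝ (Fin N × Fin d)) :
    (∀ y, bigf (G.lapMatrix ℝ) r {i₀} ψ z ≤ bigf (G.lapMatrix ℝ) r {i₀} ψ y) ↔
      ∀ (j : Fin N) (p : Fin d), z (j, p) = yopt p + (r (j, p) - r (i₀, p)) :=
  stmt7_general G i₀ hconn mψ Lψ hmψ ψ hψ yopt hyopt r z
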